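/- Let a : ℤ → ℂ^{r×r} be a finitely supported mask and v : ℤ → ℂ^{1×r} finitely supported with v̂(0) ≠ 0, and m ∈ ℕ. If there exists a finitely supported scalar sequence c : ℤ → ℂ with ĉ(0) = 1 such that v̂(2ξ)â(ξ) = ĉ(ξ)v̂(ξ) + O(|ξ|^{m+1}) and v̂(2ξ)â(ξ+π) = O(|ξ|^{m+1}) as ξ → 0, then there exists a finitely supported scalar sequence d with d̂(0) = 1 such that υ defined by υ̂(ξ) := d̂(ξ)v̂(ξ) satisfies the order m+1 sum rule conditions υ̂(2ξ)â(ξ) = υ̂(ξ) + O(|ξ|^{m+1}) and υ̂(2ξ)â(ξ+π) = O(|ξ|^{m+1}) as ξ → 0. -/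

import Mathlib

/-!
If `φ̂(ξ) = ∏_{j ≥ 1} ĉ(2⁻ʲξ)`, then `1/φ̂` satisfies `(1/φ̂)(2ξ) ĉ(ξ) = (1/φ̂)(ξ)`, so a `d` with
`d̂ = 1/φ̂ + O(|ξ|^{m+1})` satisfies `d̂(2ξ) ĉ(ξ) = d̂(ξ) + O(|ξ|^{m+1})`. Instead of building the
infinite product we solve this congruence directly for the Taylor coefficients of `d̂` at `0`
(possible because `2ⁿ ≠ 1` for `n ≥ 1`), and realise the resulting jet by a finitely supported `d`
through a Vandermonde system. Then
`υ̂(2ξ)â(ξ) - υ̂(ξ) = d̂(2ξ) (v̂(2ξ)â(ξ) - ĉ(ξ)v̂(ξ)) + (d̂(2ξ)ĉ(ξ) - d̂(ξ)) v̂(ξ)` and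
`υ̂(2ξ)â(ξ+π) = d̂(2ξ) v̂(2ξ)â(ξ+π)` are `O(|ξ|^{m+1})`, since the smooth functions whose `m`-jet
vanishes form an ideal.
-/

open Complex Polynomial

/-- Symbol (Fourier series) of a scalar sequence. -/
noncomputable def symb (u : ℤ → ℂ) (ξ : ℂ) : ℂ :=
  ∑ᶠ k : ℤ, u k * Complex.exp (-Complex.I * k * ξ)

/-- Entrywise symbol of a matrix-valued sequence. -/
noncomputable def symbM {r : ℕ} (a : ℤ → Fin r → Fin r → ℂ) (i ℓ : Fin r) (ξ : ℂ) : ℂ :=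
  ∑ᶠ k : ℤ, a k i ℓ * Complex.exp (-Complex.I * k * ξ)

open Function

section JetVanishes

variable {𝕜 : Type*} [NontriviallyNormedField 𝕜] {𝔸 : Type*} [NormedRing 𝔸] [NormedAlgebra 𝕜 𝔸]

def JetVanishes (m : ℕ) (f : 𝕜 → 𝔸) (x : 𝕜) : Prop :=
  ∀ j ≤ m, iteratedDeriv j f x = 0

variable {m : ℕ} {f g : 𝕜 → 𝔸} {x : 𝕜}

theorem JetVanishes.add (hf : JetVanishes m f x) (hg : JetVanishes m g x)
    (hf' : ContDiffAt 𝕜 m f x) (hg' : ContDiffAt 𝕜 m g x) :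
    JetVanishes m (fun ξ => f ξ + g ξ) x := fun j hj => by
  rw [iteratedDeriv_fun_add (hf'.of_le (by exact_mod_cast hj)) (hg'.of_le (by exact_mod_cast hj)),
    hf j hj, hg j hj, add_zero]

theorem JetVanishes.mul_left (hf : JetVanishes m f x) (hf' : ContDiffAt 𝕜 m f x)
    (hg' : ContDiffAt 𝕜 m g x) : JetVanishes m (fun ξ => g ξ * f ξ) x := fun j hj => by
  rw [iteratedDeriv_fun_mul (hg'.of_le (by exact_mod_cast hj)) (hf'.of_le (by exact_mod_cast hj))]
  refine Finset.sum_eq_zero fun i _ => ?_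
  rw [hf (j - i) (by omega), mul_zero]

theorem JetVanishes.mul_right (hf : JetVanishes m f x) (hf' : ContDiffAt 𝕜 m f x)
    (hg' : ContDiffAt 𝕜 m g x) : JetVanishes m (fun ξ => f ξ * g ξ) x := fun j hj => by
  rw [iteratedDeriv_fun_mul (hf'.of_le (by exact_mod_cast hj)) (hg'.of_le (by exact_mod_cast hj))]
  refine Finset.sum_eq_zero fun i hi => ?_
  rw [hf i (by have := Finset.mem_range.mp hi; omega), mul_zero, zero_mul]

theorem JetVanishes.mul_sub_mul {R : Type*} [NormedCommRing R] [NormedAlgebra 𝕜 R]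
    {S C V E D : 𝕜 → R} (hS : JetVanishes m (fun ξ => S ξ - C ξ * V ξ) x)
    (hED : JetVanishes m (fun ξ => E ξ * C ξ - D ξ) x) (hS' : ContDiffAt 𝕜 m S x)
    (hC' : ContDiffAt 𝕜 m C x) (hV' : ContDiffAt 𝕜 m V x) (hE' : ContDiffAt 𝕜 m E x)
    (hD' : ContDiffAt 𝕜 m D x) :
    JetVanishes m (fun ξ => E ξ * S ξ - D ξ * V ξ) x := by
  have h := (hS.mul_left (hS'.sub (hC'.mul hV')) hE').add
    (hED.mul_right ((hE'.mul hC').sub hD') hV')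
    (hE'.mul (hS'.sub (hC'.mul hV'))) (((hE'.mul hC').sub hD').mul hV')
  convert h using 2
  ring

end JetVanishes

theorem symb_eq_sum {u : ℤ → ℂ} {s : Finset ℤ} (hs : support u ⊆ s) :
    symb u = fun ξ => ∑ k ∈ s, u k * exp (-I * k * ξ) :=
  funext fun _ => finsum_eq_sum_of_support_subset _ ((support_mul_subset_left _ _).trans hs)

theorem contDiff_symb {u : ℤ → ℂ} (hu : (support u).Finite) {n : WithTop ℕ∞} :
    ContDiff ℂ n (symb u) := by
  rw [symb_eq_sum hu.coe_toFinset.superset]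
  fun_prop

theorem iteratedDeriv_symb {u : ℤ → ℂ} {s : Finset ℤ} (hs : support u ⊆ s) (n : ℕ) (ξ : ℂ) :
    iteratedDeriv n (symb u) ξ = ∑ k ∈ s, u k * ((-I * k) ^ n * exp (-I * k * ξ)) := by
  rw [symb_eq_sum hs, iteratedDeriv_fun_sum fun k _ => by fun_prop]
  refine Finset.sum_congr rfl fun k _ => ?_
  rw [iteratedDeriv_const_mul_field, iteratedDeriv_cexp_const_mul]

theorem exists_symb_iteratedDeriv_zero_eq (m : ℕ) (T : ℕ → ℂ) :
    ∃ d : ℤ → ℂ, (support d).Finite ∧ ∀ j ≤ m, iteratedDeriv j (symb d) 0 = T j := by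
  classical
  -- `(symb d)⁽ʲ⁾(0) = ∑ₚ d p (-I p)ʲ`: a Vandermonde system with the distinct nodes `-I p`.
  let e : Fin (m + 1) → ℤ := fun p => p
  have he : Injective e := fun p q h => Fin.ext (by simpa [e] using h)
  have hnodes : Injective fun p => -I * (e p : ℂ) := fun p q h =>
    he (by simpa [I_ne_zero] using h)
  obtain ⟨w, hw⟩ := (Matrix.vecMul_surjective_iff_isUnit.mpr <|
    (Matrix.isUnit_iff_isUnit_det _).mpr <|
      (Matrix.det_vandermonde_ne_zero_iff.mpr hnodes).isUnit) fun j => T j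
  have hsupp : support (extend e w 0) ⊆ Finset.univ.image e := fun k hk => by
    by_contra h
    exact hk (extend_apply' _ _ _ fun ⟨p, hp⟩ => h (by simp [← hp]))
  refine ⟨extend e w 0, (Finset.finite_toSet _).subset hsupp, fun j hj => ?_⟩
  rw [iteratedDeriv_symb hsupp, Finset.sum_image fun p _ q _ h => he h]
  simpa [he.extend_apply, Matrix.vecMul, dotProduct, mul_comm] using congrFun hw ⟨j, by omega⟩

-- The derivatives at `0` of a solution `D` of `D(2ξ) g(ξ) = D(ξ)`, where `C n = g⁽ⁿ⁾(0)` and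
-- `C 0 = 1`: by Leibniz, `∑ₖ (n choose k) 2ᵏ D⁽ᵏ⁾(0) C (n - k) = D⁽ⁿ⁾(0)`, solved for `D⁽ⁿ⁾(0)`.
noncomputable def refinableJet {K : Type*} [Field K] (C : ℕ → K) : ℕ → K
  | 0 => 1
  | n + 1 => (∑ k : Fin (n + 1), ((n + 1).choose k : K) * 2 ^ (k : ℕ) * refinableJet C k *
      C (n + 1 - k)) / (1 - 2 ^ (n + 1))

theorem sum_choose_mul_refinableJet {K : Type*} [Field K] [CharZero K] {C : ℕ → K} (hC : C 0 = 1)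
    (n : ℕ) :
    ∑ k ∈ Finset.range (n + 1), (n.choose k : K) * 2 ^ k * refinableJet C k * C (n - k) =
      refinableJet C n := by
  rcases n with _ | n
  · simp [refinableJet, hC]
  · have h2 : (1 : K) - 2 ^ (n + 1) ≠ 0 := by
      rw [sub_ne_zero, ne_comm]
      exact_mod_cast (Nat.one_lt_two_pow (Nat.succ_ne_zero n)).ne'
    rw [Finset.sum_range_succ, ← Fin.sum_univ_eq_sum_range
      (fun k => ((n + 1).choose k : K) * 2 ^ k * refinableJet C k * C (n + 1 - k)),
      refinableJet]
    field_simp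
    simp [hC]

theorem jetVanishes_refinable {𝕜 : Type*} [NontriviallyNormedField 𝕜] [CharZero 𝕜] {m : ℕ}
    {f g : 𝕜 → 𝕜} (hf : ContDiff 𝕜 m f) (hg : ContDiff 𝕜 m g) (hg0 : g 0 = 1)
    (hfg : ∀ j ≤ m, iteratedDeriv j f 0 = refinableJet (fun n => iteratedDeriv n g 0) j) :
    JetVanishes m (fun ξ => f (2 * ξ) * g ξ - f ξ) 0 := fun n hn => by
  have hfn : ContDiff 𝕜 n f := hf.of_le (by exact_mod_cast hn)
  have hgn : ContDiff 𝕜 n g := hg.of_le (by exact_mod_cast hn)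
  have hf2 : ContDiff 𝕜 n fun ξ => f (2 * ξ) := hfn.comp (contDiff_const.mul contDiff_id)
  rw [iteratedDeriv_fun_sub (hf2.mul hgn).contDiffAt hfn.contDiffAt,
    iteratedDeriv_fun_mul hf2.contDiffAt hgn.contDiffAt, hfg n hn, ← sum_choose_mul_refinableJet
      (C := fun n => iteratedDeriv n g 0) (by simpa using hg0) n, sub_eq_zero]
  refine Finset.sum_congr rfl fun k hk => ?_
  have hk : k ≤ n := Nat.lt_succ_iff.mp (Finset.mem_range.mp hk)
  simp only [iteratedDeriv_comp_const_mul (hf.of_le (by exact_mod_cast hk.trans hn)), mul_zero,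
    hfg k (hk.trans hn), mul_assoc]

theorem exists_refinable_symb (m : ℕ) {c : ℤ → ℂ} (hc : (support c).Finite)
    (hc0 : symb c 0 = 1) :
    ∃ d : ℤ → ℂ, (support d).Finite ∧ symb d 0 = 1 ∧
      JetVanishes m (fun ξ => symb d (2 * ξ) * symb c ξ - symb d ξ) 0 := by
  obtain ⟨d, hd, hjet⟩ :=
    exists_symb_iteratedDeriv_zero_eq m (refinableJet fun n => iteratedDeriv n (symb c) 0)
  refine ⟨d, hd, by simpa [refinableJet] using hjet 0 (Nat.zero_le m), ?_⟩
  exact jetVanishes_refinable (contDiff_symb hd) (contDiff_symb hc) hc0 hjet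

theorem stmt10_general (r m : ℕ) (a : ℤ → Fin r → Fin r → ℂ)
    (ha : (Function.support a).Finite)
    (v : ℤ → Fin r → ℂ) (hv : (Function.support v).Finite)
    (c : ℤ → ℂ) (hc : (Function.support c).Finite) (hc0 : symb c 0 = 1)
    (h1 : ∀ j ≤ m, ∀ ℓ : Fin r,
      iteratedDeriv j
        (fun ξ : ℂ => (∑ i : Fin r, symb (fun k => v k i) (2 * ξ) * symbM a i ℓ ξ) -
          symb c ξ * symb (fun k => v k ℓ) ξ) 0 = 0)
    (h2 : ∀ j ≤ m, ∀ ℓ : Fin r,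
      iteratedDeriv j
        (fun ξ : ℂ => ∑ i : Fin r, symb (fun k => v k i) (2 * ξ) *
          symbM a i ℓ (ξ + (Real.pi : ℂ))) 0 = 0) :
    ∃ d : ℤ → ℂ, (Function.support d).Finite ∧ symb d 0 = 1 ∧
      (∀ j ≤ m, ∀ ℓ : Fin r,
        iteratedDeriv j
          (fun ξ : ℂ =>
            (∑ i : Fin r, symb d (2 * ξ) * symb (fun k => v k i) (2 * ξ) * symbM a i ℓ ξ) -
              symb d ξ * symb (fun k => v k ℓ) ξ) 0 = 0) ∧
      (∀ j ≤ m, ∀ ℓ : Fin r,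
        iteratedDeriv j
          (fun ξ : ℂ => ∑ i : Fin r, symb d (2 * ξ) * symb (fun k => v k i) (2 * ξ) *
            symbM a i ℓ (ξ + (Real.pi : ℂ))) 0 = 0) := by
  have hvi : ∀ i, (support fun k => v k i).Finite := fun i =>
    hv.subset fun k hk h => hk (congrFun h i)
  have hai : ∀ i ℓ, ContDiff ℂ m (symbM a i ℓ) := fun i ℓ =>
    contDiff_symb (ha.subset fun k hk h => hk (congrFun (congrFun h i) ℓ))
  have hdil : ∀ {u : ℤ → ℂ}, (support u).Finite → ContDiff ℂ m fun ξ => symb u (2 * ξ) :=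
    fun hu => (contDiff_symb hu).comp (contDiff_const.mul contDiff_id)
  obtain ⟨d, hd, hd0, hdc⟩ := exists_refinable_symb m hc hc0
  refine ⟨d, hd, hd0, fun j hj ℓ => ?_, fun j hj ℓ => ?_⟩
  · have hS : ContDiff ℂ m fun ξ => ∑ i, symb (fun k => v k i) (2 * ξ) * symbM a i ℓ ξ :=
      ContDiff.sum fun i _ => (hdil (hvi i)).mul (hai i ℓ)
    have h := JetVanishes.mul_sub_mul (fun j hj => h1 j hj ℓ) hdc hS.contDiffAt
      (contDiff_symb hc).contDiffAt (contDiff_symb (hvi ℓ)).contDiffAt (hdil hd).contDiffAt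
      (contDiff_symb hd).contDiffAt
    simpa only [Finset.mul_sum, mul_assoc] using h j hj
  · have hS : ContDiff ℂ m fun ξ =>
        ∑ i, symb (fun k => v k i) (2 * ξ) * symbM a i ℓ (ξ + (Real.pi : ℂ)) :=
      ContDiff.sum fun i _ => (hdil (hvi i)).mul ((hai i ℓ).comp (contDiff_id.add contDiff_const))
    have h := JetVanishes.mul_left (fun j hj => h2 j hj ℓ) hS.contDiffAt (hdil hd).contDiffAt
    simpa only [Finset.mul_sum, mul_assoc] using h j hj

/-- if `v̂(2ξ)â(ξ) = ĉ(ξ)v̂(ξ) + O(|ξ|^{m+1})` and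
`v̂(2ξ)â(ξ+π) = O(|ξ|^{m+1})` for some finitely supported `c` with `ĉ(0)=1`, then there is a
finitely supported `d` with `d̂(0)=1` so that `υ̂ := d̂ v̂` satisfies the order `m+1` sum rules. -/
theorem stmt10 (r m : ℕ) (a : ℤ → Fin r → Fin r → ℂ)
    (ha : (Function.support a).Finite)
    (v : ℤ → Fin r → ℂ) (hv : (Function.support v).Finite)
    (hv0 : (fun ℓ => symb (fun k => v k ℓ) 0) ≠ 0)
    (c : ℤ → ℂ) (hc : (Function.support c).Finite) (hc0 : symb c 0 = 1)
    (h1 : ∀ j ≤ m, ∀ ℓ : Fin r,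
      iteratedDeriv j
        (fun ξ : ℂ => (∑ i : Fin r, symb (fun k => v k i) (2 * ξ) * symbM a i ℓ ξ) -
          symb c ξ * symb (fun k => v k ℓ) ξ) 0 = 0)
    (h2 : ∀ j ≤ m, ∀ ℓ : Fin r,
      iteratedDeriv j
        (fun ξ : ℂ => ∑ i : Fin r, symb (fun k => v k i) (2 * ξ) *
          symbM a i ℓ (ξ + (Real.pi : ℂ))) 0 = 0) :
    ∃ d : ℤ → ℂ, (Function.support d).Finite ∧ symb d 0 = 1 ∧
      (∀ j ≤ m, ∀ ℓ : Fin r,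
        iteratedDeriv j
          (fun ξ : ℂ =>
            (∑ i : Fin r, symb d (2 * ξ) * symb (fun k => v k i) (2 * ξ) * symbM a i ℓ ξ) -
              symb d ξ * symb (fun k => v k ℓ) ξ) 0 = 0) ∧
      (∀ j ≤ m, ∀ ℓ : Fin r,
        iteratedDeriv j
          (fun ξ : ℂ => ∑ i : Fin r, symb d (2 * ξ) * symb (fun k => v k i) (2 * ξ) *
            symbM a i ℓ (ξ + (Real.pi : ℂ))) 0 = 0) :=
  stmt10_general r m a ha v hv c hc hc0 h1 h2
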